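/- arXiv:1210.1982 — 4 statements merged into one kernel-verified Lean document; each statement's English description precedes it below -/
import Mathlib

section
/- Let R be a commutative ring, M a finitely generated R-module with projective resolution ⋯ → P₁ → P₀ → M → 0, and x ∈ R an element such that x · Ext¹_R(M, Ω M) = 0, where Ω M is the first syzygy (the kernel of P₀ → M). Then the pullback N of the surjection P₀ → M along the multiplication map x : M → M is isomorphic to Ω M ⊕ M. -/
/-! Compute `Ext¹(M, Ω M)` with any projective resolution `Q → M`. A lift `α : Q₀ → P₀` of
`Q₀ → M` through `π` restricts on `Q₁` to a cocycle `c : Q₁ → Ω M`, whose class is killed by `x`: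
so `x • c = g ∘ d` for some `g : Q₀ → Ω M`. Then `x • α - g` vanishes on the image of `d`, hence
descends to `σ : M → P₀` with `π ∘ σ = x • id`. Given such a `σ`, the map
`(p, m) ↦ (p - σ m, m)` identifies the pullback with `Ω M × M`. -/

open CategoryTheory Opposite Function

universe u

namespace CategoryTheory

variable {R : Type*} [Ring R]

lemma ShortComplex.moduleCat_exists_f_eq_smul (S : ShortComplex (ModuleCat R)) {x : R}
    (hx : ∀ e : S.homology, x • e = 0) (z : S.X₂) (hz : S.g z = 0) :
    ∃ y, S.f y = x • z := by
  let e := S.moduleCatHomologyIso.toLinearEquiv.symm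
  have h : Submodule.Quotient.mk (x • ⟨z, hz⟩) = (0 : LinearMap.ker S.g.hom ⧸ _) :=
    e.map_eq_zero_iff.mp ((e.map_smul x (Submodule.Quotient.mk ⟨z, hz⟩)).trans (hx _))
  obtain ⟨y, hy⟩ := (Submodule.Quotient.mk_eq_zero _).mp h
  exact ⟨y, congrArg Subtype.val hy⟩

variable {C : Type*} [Category C] [Abelian C] [Linear R C] [EnoughProjectives C]

lemma ProjectiveResolution.exists_d_comp_eq_smul {X Y : C} (Q : ProjectiveResolution X) {x : R}
    (hx : ∀ e : ((Ext R C 1).obj (Opposite.op X)).obj Y, x • e = 0)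
    (c : Q.complex.X 1 ⟶ Y) (hc : Q.complex.d 2 1 ≫ c = 0) :
    ∃ g : Q.complex.X 0 ⟶ Y, Q.complex.d 1 0 ≫ g = x • c := by
  let T := Q.complex.linearYonedaObj R Y
  let Φ := (Q.isoExt 1 Y ≪≫ T.homologyIsoSc' 0 1 2 (by simp) (by simp)).toLinearEquiv
  have hT : ∀ e : (T.sc' 0 1 2).homology, x • e = 0 := fun e ↦ by
    simpa using (Φ.map_smul x (Φ.symm e)).symm.trans (congrArg Φ (hx _))
  exact (T.sc' 0 1 2).moduleCat_exists_f_eq_smul hT c hc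

theorem ShortComplex.ShortExact.exists_comp_g_eq_smul_id {S : ShortComplex C} (hS : S.ShortExact)
    {x : R} (hx : ∀ e : ((Ext R C 1).obj (Opposite.op S.X₃)).obj S.X₁, x • e = 0) :
    ∃ σ : S.X₃ ⟶ S.X₂, σ ≫ S.g = x • 𝟙 S.X₃ := by
  have : Mono S.f := hS.mono_f
  have : Epi S.g := hS.epi_g
  let Q := projectiveResolution S.X₃
  let ε : Q.complex.X 0 ⟶ S.X₃ := Q.π.f 0
  have : Epi ε := inferInstanceAs (Epi (Q.π.f 0))
  have hε : Q.complex.d 1 0 ≫ ε = 0 := Q.complex_d_comp_π_f_zero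
  have hQ : (ShortComplex.mk _ _ hε).Exact := Q.exact₀
  let α := Projective.factorThru ε S.g
  have hα : α ≫ S.g = ε := Projective.factorThru_comp _ _
  let c := hS.exact.lift (Q.complex.d 1 0 ≫ α) (by simp [hα, hε])
  have hc : Q.complex.d 2 1 ≫ c = 0 := by simp [← cancel_mono S.f, c]
  obtain ⟨g, hg⟩ := Q.exists_d_comp_eq_smul hx c hc
  let τ := x • α - g ≫ S.f
  have hτ : Q.complex.d 1 0 ≫ τ = 0 := by simp [τ, reassoc_of% hg, c]
  refine ⟨hQ.desc τ hτ, ?_⟩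
  rw [← cancel_epi ε]
  simp [hQ.g_desc_assoc, τ, hα]

end CategoryTheory

namespace LinearMap

variable {R P M N : Type*} [Ring R] [AddCommGroup P] [AddCommGroup M] [AddCommGroup N]
  [Module R P] [Module R M] [Module R N]

lemma mem_ker_comp_fst_sub_comp_snd {f : P →ₗ[R] M} {g : N →ₗ[R] M} {z : P × N} :
    z ∈ ker (f ∘ₗ fst R P N - g ∘ₗ snd R P N) ↔ f z.1 = g z.2 := by
  simp [sub_eq_zero]

def kerCompFstSubCompSndEquivOfLift (f : P →ₗ[R] M) (g : N →ₗ[R] M) (σ : N →ₗ[R] P)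
    (hσ : f ∘ₗ σ = g) : ker (f ∘ₗ fst R P N - g ∘ₗ snd R P N) ≃ₗ[R] ker f × N where
  toFun z := (⟨z.1.1 - σ z.1.2, by simp [mem_ker_comp_fst_sub_comp_snd.mp z.2, ← hσ]⟩, z.1.2)
  invFun w := ⟨(w.1 + σ w.2, w.2),
    mem_ker_comp_fst_sub_comp_snd.mpr (by simp [← hσ, mem_ker.mp w.1.2])⟩
  map_add' z z' := by ext <;> simp; abel
  map_smul' r z := by ext <;> simp [smul_sub]
  left_inv z := by ext <;> simp
  right_inv w := by ext <;> simp

end LinearMap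

theorem stmt0_general {R : Type u} [CommRing R] (M P₀ : Type u)
    [AddCommGroup M] [Module R M]
    [AddCommGroup P₀] [Module R P₀]
    (π : P₀ →ₗ[R] M) (hπ : Surjective π) (x : R)
    (hx : ∀ e : ((Ext R (ModuleCat.{u} R) 1).obj
        (op (ModuleCat.of R M))).obj (ModuleCat.of R (LinearMap.ker π)),
      x • e = 0) :
    Nonempty
      ((↥(LinearMap.ker (π.comp (LinearMap.fst R P₀ M) - x • LinearMap.snd R P₀ M)))
        ≃ₗ[R] (↥(LinearMap.ker π) × M)) := by
  obtain ⟨σ, hσ⟩ := (LinearMap.shortExact_shortComplexKer hπ).exists_comp_g_eq_smul_id hx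
  have hlift : π ∘ₗ σ.hom = x • LinearMap.id := congrArg ModuleCat.Hom.hom hσ
  rw [← LinearMap.id_comp (LinearMap.snd R P₀ M), ← LinearMap.smul_comp]
  exact ⟨LinearMap.kerCompFstSubCompSndEquivOfLift π _ σ.hom hlift⟩

/-- If `x · Ext¹_R(M, Ω M) = 0`, the pullback of the surjection `P₀ → M` along
multiplication by `x` on `M` is isomorphic to `Ω M ⊕ M`. -/
theorem stmt0 {R : Type u} [CommRing R] (M P₀ : Type u)
    [AddCommGroup M] [Module R M] [Module.Finite R M]
    [AddCommGroup P₀] [Module R P₀] [Module.Projective R P₀]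
    (π : P₀ →ₗ[R] M) (hπ : Surjective π) (x : R)
    (hx : ∀ e : ((Ext R (ModuleCat.{u} R) 1).obj
        (op (ModuleCat.of R M))).obj (ModuleCat.of R (LinearMap.ker π)),
      x • e = 0) :
    Nonempty
      ((↥(LinearMap.ker (π.comp (LinearMap.fst R P₀ M) - x • LinearMap.snd R P₀ M)))
        ≃ₗ[R] (↥(LinearMap.ker π) × M)) :=
  stmt0_general M P₀ π hπ x hx
end

section
/- Let R be a commutative noetherian ring, M a finitely generated R-module, and I an ideal with V(I) containing the nonfree locus of M. Then there exists a positive integer p such that I^p · Ext^i_R(M, N) = 0 for all integers i > 0 and all finitely generated R-modules N. -/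
/-!
Fix a surjection `π : Rᵐ → M` and let `q` be the ideal of those `r` for which `r • 𝟙 M` lifts
along `π`. Since `Ext` is `R`-linear in its first argument, `r` acts on `Ext^i(M, N)` through
`r • 𝟙 M`; for `r ∈ q` this factors through the projective `Rᵐ`, so `r` kills `Ext^{>0}(M, N)`.
If `M_p` is free, a splitting of `π_p` descends, after clearing denominators (`M` is finitely
presented), to a lift of `s • 𝟙 M` with `s ∉ p`. Hence `V(q) ⊆ nf(M) ⊆ V(I)`, so `I ⊆ √q` and,
`I` being finitely generated, `I^k ⊆ q`.
-/

open CategoryTheory Opposite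

universe u

namespace CategoryTheory

section Opposite

variable {R : Type*} [Ring R] {C : Type*} [Category C] [Preadditive C]
  [CategoryTheory.Linear R C]

noncomputable instance Linear.oppositeSMul (X Y : Cᵒᵖ) : SMul R (X ⟶ Y) :=
  ⟨fun r f => (r • f.unop).op⟩

@[simp] lemma Linear.unop_smul {X Y : Cᵒᵖ} (r : R) (f : X ⟶ Y) :
    (r • f).unop = r • f.unop := rfl

noncomputable instance Linear.oppositeModule (X Y : Cᵒᵖ) : Module R (X ⟶ Y) :=
  Function.Injective.module R (unopHom X Y) Quiver.Hom.unop_inj fun _ _ => rfl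

noncomputable instance Linear.opposite : CategoryTheory.Linear R Cᵒᵖ where
  smul_comp _ _ _ r f g := Quiver.Hom.unop_inj (by simp [Linear.comp_smul])
  comp_smul _ _ _ f r g := Quiver.Hom.unop_inj (by simp [Linear.smul_comp])

instance Functor.rightOp_linear {D : Type*} [Category D] [Preadditive D]
    [CategoryTheory.Linear R D] (F : Cᵒᵖ ⥤ D) [F.Additive] [F.Linear R] : F.rightOp.Linear R where
  map_smul f r := Quiver.Hom.unop_inj (Functor.Linear.map_smul (F := F) f.op r)

end Opposite

instance Functor.linearYoneda_obj_linear {R : Type*} [CommRing R] {C : Type*} [Category C]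
    [Preadditive C] [CategoryTheory.Linear R C] (Y : C) :
    ((linearYoneda R C).obj Y).Linear R where
  map_smul f r := by
    ext g
    exact Linear.smul_comp _ _ _ r f.unop g

end CategoryTheory

namespace HomologicalComplex

variable {R : Type*} [Ring R] {C : Type*} [Category C] [Preadditive C]
  [CategoryTheory.Linear R C] {ι : Type*} {c : ComplexShape ι}

lemma homologyMap_smul {K L : HomologicalComplex C c} (f : K ⟶ L) (i : ι)
    [K.HasHomology i] [L.HasHomology i] (r : R) :
    homologyMap (r • f) i = r • homologyMap f i := by
  have : (shortComplexFunctor C c i).map (r • f) = r • (shortComplexFunctor C c i).map f := by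
    ext <;> rfl
  change ShortComplex.homologyMap _ = _
  rw [this, ShortComplex.homologyMap_smul]
  rfl

instance homologyFunctor_linear [CategoryWithHomology C] (i : ι) :
    (homologyFunctor C c i).Linear R where
  map_smul f r := homologyMap_smul f i r

end HomologicalComplex

namespace CategoryTheory

section LeftDerived

variable {R : Type*} [Ring R] {C : Type*} [Category C] [Abelian C] [CategoryTheory.Linear R C]

instance ChainComplex.single₀_linear : (ChainComplex.single₀ C).Linear R where
  map_smul f r := by
    ext
    rw [HomologicalComplex.smul_f_apply, ChainComplex.single₀_map_f_zero,
      ChainComplex.single₀_map_f_zero]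
    rfl

variable [EnoughProjectives C] {D : Type*} [Category D] [Abelian D]
  [CategoryTheory.Linear R D]

instance Functor.leftDerived_linear (F : C ⥤ D) [F.Additive] [F.Linear R] (n : ℕ) :
    (F.leftDerived n).Linear R where
  map_smul {X Y} f r := by
    let P := ProjectiveResolution.of X
    let Q := ProjectiveResolution.of Y
    have w : (r • ProjectiveResolution.lift f P Q) ≫ Q.π =
        P.π ≫ (ChainComplex.single₀ C).map (r • f) := by
      rw [Linear.smul_comp, ProjectiveResolution.lift_commutes, Functor.map_smul,
        Linear.comp_smul]
    rw [F.leftDerived_map_eq n (r • f) _ w, F.leftDerived_map_eq n f _ (P.lift_commutes f Q),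
      Functor.map_smul, Linear.smul_comp, Linear.comp_smul]

end LeftDerived

end CategoryTheory

section Ext

variable {R : Type*} [CommRing R] {C : Type*} [Category C] [Abelian C]
  [CategoryTheory.Linear R C] [EnoughProjectives C]

lemma Ext_map_smul_app {X X' : C} (f : X ⟶ X') (r : R) (n : ℕ) (Y : C) :
    ((Ext R C n).map (r • f).op).app Y = r • ((Ext R C n).map f.op).app Y := by
  change ((((linearYoneda R C).obj Y).rightOp.leftDerived n).map (r • f)).unop = _
  rw [Functor.map_smul]
  rfl

lemma Ext_smul_eq_zero_of_comp_eq_smul_id {X P : C} [Projective P] (i : X ⟶ P) (p : P ⟶ X)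
    (r : R) (hr : i ≫ p = r • 𝟙 X) (n : ℕ) (Y : C)
    (e : ((Ext R C (n + 1)).obj (op X)).obj Y) : r • e = 0 := by
  have hzero : ((Ext R C (n + 1)).map (r • 𝟙 X).op).app Y = 0 := by
    rw [← hr, op_comp, Functor.map_comp, NatTrans.comp_app,
      (isZero_Ext_succ_of_projective P Y n).eq_zero_of_tgt (((Ext R C (n + 1)).map p.op).app Y),
      Limits.zero_comp]
  have := congrArg (fun φ => φ.hom e) hzero
  rw [Ext_map_smul_app, op_id, CategoryTheory.Functor.map_id, NatTrans.id_app] at this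
  simpa using this

end Ext

namespace LinearMap

variable {R M P : Type*} [CommRing R] [AddCommGroup M] [Module R M] [AddCommGroup P]
  [Module R P]

def smulLiftIdeal (π : P →ₗ[R] M) : Ideal R :=
  (range (llcomp R M P M π : (M →ₗ[R] P) →ₗ[R] M →ₗ[R] M)).comap
    (toSpanSingleton R (M →ₗ[R] M) LinearMap.id)

lemma mem_smulLiftIdeal {π : P →ₗ[R] M} {r : R} :
    r ∈ π.smulLiftIdeal ↔ ∃ g : M →ₗ[R] P, π ∘ₗ g = r • LinearMap.id :=
  Iff.rfl

lemma exists_mem_smulLiftIdeal_of_projective_localizedModule [Module.FinitePresentation R M]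
    {π : P →ₗ[R] M} (hπ : Function.Surjective π) (S : Submonoid R)
    [Module.Projective (Localization S) (LocalizedModule S M)] :
    ∃ s ∈ S, s ∈ π.smulLiftIdeal := by
  let mkM := LocalizedModule.mkLinearMap S M
  let mkP := LocalizedModule.mkLinearMap S P
  obtain ⟨σ, hσ⟩ := Module.projective_lifting_property (LocalizedModule.map S π) LinearMap.id
    (LocalizedModule.map_surjective S π hπ)
  obtain ⟨g, s, hg⟩ := Module.FinitePresentation.exists_lift_of_isLocalizedModule S mkP
    (σ.restrictScalars R ∘ₗ mkM)
  have hlocal : mkM ∘ₗ (π ∘ₗ g) = mkM ∘ₗ ((s : R) • LinearMap.id) := by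
    ext x
    have hgx : mkP (g x) = (s : R) • σ (mkM x) := LinearMap.congr_fun hg x
    have hσx : LocalizedModule.map S π (σ (mkM x)) = mkM x := LinearMap.congr_fun hσ (mkM x)
    have hπx : mkM (π (g x)) = LocalizedModule.map S π (mkP (g x)) := by simp [mkM, mkP]
    simp only [comp_apply, smul_apply, id_apply, map_smul]
    rw [hπx, hgx, map_smul_of_tower, hσx]
  obtain ⟨t, ht⟩ := Module.Finite.exists_smul_of_comp_eq_of_isLocalizedModule S mkM _ _ hlocal
  refine ⟨t * s, mul_mem t.2 s.2, mem_smulLiftIdeal.2 ⟨(t : R) • g, ?_⟩⟩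
  rw [comp_smul, ← Submonoid.smul_def, ht, Submonoid.smul_def, smul_smul]

lemma not_free_localizedModule_of_smulLiftIdeal_le [Module.FinitePresentation R M]
    {π : P →ₗ[R] M} (hπ : Function.Surjective π) {p : Ideal R} [p.IsPrime]
    (hp : π.smulLiftIdeal ≤ p) :
    ¬ Module.Free (Localization.AtPrime p) (LocalizedModule p.primeCompl M) := by
  intro hfree
  obtain ⟨s, hs, hsq⟩ := exists_mem_smulLiftIdeal_of_projective_localizedModule hπ p.primeCompl
  exact hs (hp hsq)

end LinearMap

/-- If the nonfree locus of a finitely generated module `M` over a noetherian ring is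
contained in `V(I)`, then some power `I^k` annihilates `Ext^i_R(M, N)` for all `i > 0`
and all finitely generated `N`. -/
theorem stmt3 {R : Type u} [CommRing R] [IsNoetherianRing R]
    (M : Type u) [AddCommGroup M] [Module R M] [Module.Finite R M]
    (I : Ideal R)
    (h : ∀ (p : Ideal R) [p.IsPrime],
      ¬ Module.Free (Localization.AtPrime p) (LocalizedModule p.primeCompl M) → I ≤ p) :
    ∃ k : ℕ, 0 < k ∧ ∀ i : ℕ, 0 < i →
      ∀ (N : Type u) [AddCommGroup N] [Module R N], Module.Finite R N →
      ∀ r ∈ I ^ k,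
      ∀ e : ((Ext R (ModuleCat.{u} R) i).obj (op (ModuleCat.of R M))).obj (ModuleCat.of R N),
        r • e = 0 := by
  have : Module.FinitePresentation R M := Module.finitePresentation_of_finite R M
  obtain ⟨m, π, hπ⟩ := Module.Finite.exists_fin' R M
  have hI : I ≤ π.smulLiftIdeal.radical := by
    rw [Ideal.radical_eq_sInf]
    exact le_sInf fun p ⟨hqp, _⟩ =>
      h p (π.not_free_localizedModule_of_smulLiftIdeal_le hπ hqp)
  obtain ⟨k, hk⟩ := Ideal.exists_pow_le_of_le_radical_of_fg hI (IsNoetherian.noetherian I)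
  refine ⟨k + 1, k.succ_pos, fun i hi N _ _ _ r hr e => ?_⟩
  obtain ⟨g, hg⟩ := LinearMap.mem_smulLiftIdeal.1 (hk (Ideal.pow_le_pow_right k.le_succ hr))
  obtain ⟨j, rfl⟩ := Nat.exists_eq_add_of_lt hi
  exact Ext_smul_eq_zero_of_comp_eq_smul_id (ModuleCat.ofHom g) (ModuleCat.ofHom π) r
    (ModuleCat.hom_ext hg) _ _ e
end

section
/- Let R be a commutative ring, M a finitely generated R-module, and x ∈ R a nonzerodivisor on M such that x · Ext¹_R(M, Ω M) = 0. Then the first syzygy of M/xM is isomorphic (up to projective direct summands) to M ⊕ Ω M, where Ω M is the first syzygy of M. -/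
open CategoryTheory Opposite Function Limits

universe u

/-!
The sequence `0 → Ω M → P₀ → M → 0` has an extension class in `Ext¹(M, Ω M)`; since `x` kills it,
`x • 𝟙 M` lifts to some `t : M → P₀` with `π ∘ t = x`. Concretely, on a projective resolution `P`
of `M`, a lift `α : P.X 0 → P₀` of the augmentation restricts on `P.X 1` to a cocycle with values
in `Ω M`; `x` times that cocycle is a coboundary `h ∘ d`, and `x • α - h` vanishes on the image of
`d`, hence descends to `M`. Given `t`, the map `(m, k) ↦ t m + k` identifies `M × Ω M` with the
kernel of `P₀ → M / xM`; it is injective because `x` is regular on `M`.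
-/

namespace CategoryTheory.ShortComplex

variable {R : Type*} [Ring R]

theorem exists_f_eq_smul_of_smul_homology_eq_zero (S : ShortComplex (ModuleCat R)) {r : R}
    (hr : ∀ e : S.homology, r • e = 0) (z : S.X₂) (hz : S.g z = 0) :
    ∃ y, S.f y = r • z := by
  let H := S.moduleCatHomologyIso
  let c : LinearMap.ker S.g.hom := ⟨z, hz⟩
  let q : S.moduleCatLeftHomologyData.H := (LinearMap.range S.moduleCatToCycles).mkQ c
  have hc : (LinearMap.range S.moduleCatToCycles).mkQ (r • c) = 0 :=
    calc _ = r • q := map_smul _ r c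
      _ = r • H.hom (H.inv q) := by rw [Iso.inv_hom_id_apply]
      _ = H.hom (r • H.inv q) := (map_smul H.hom.hom r _).symm
      _ = 0 := by rw [hr, map_zero]
  obtain ⟨y, hy⟩ := (Submodule.Quotient.mk_eq_zero _).1 hc
  exact ⟨y, congrArg Subtype.val hy⟩

end CategoryTheory.ShortComplex

namespace CategoryTheory.ProjectiveResolution

variable {R : Type*} [Ring R] {C : Type*} [Category C] [Abelian C] [Linear R C]
  [EnoughProjectives C]

theorem exists_d_comp_eq_smul_of_smul_ext_eq_zero {X Y : C} (P : ProjectiveResolution X)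
    {r : R} (hr : ∀ e : ((Ext R C 1).obj (op X)).obj Y, r • e = 0)
    (g : P.complex.X 1 ⟶ Y) (hg : P.complex.d 2 1 ≫ g = 0) :
    ∃ h : P.complex.X 0 ⟶ Y, P.complex.d 1 0 ≫ h = r • g := by
  let K := P.complex.linearYonedaObj R Y
  let S := K.sc' 0 1 2
  let E : ((Ext R C 1).obj (op X)).obj Y ≅ S.homology := P.isoExt 1 Y ≪≫
    ShortComplex.homologyMapIso (K.isoSc' 0 1 2 (by simp) (by simp))
  have hS : ∀ e : S.homology, r • e = 0 := fun e => by
    rw [← Iso.inv_hom_id_apply E e, ← map_smul E.hom.hom, hr, map_zero]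
  exact S.exists_f_eq_smul_of_smul_homology_eq_zero hS g hg

end CategoryTheory.ProjectiveResolution

namespace CategoryTheory.ShortComplex.ShortExact

variable {R : Type*} [Ring R] {C : Type*} [Category C] [Abelian C] [Linear R C]
  [EnoughProjectives C]

theorem exists_comp_g_eq_smul_id_of_smul_ext_eq_zero {S : ShortComplex C} (hS : S.ShortExact)
    [Projective S.X₂] {r : R}
    (hr : ∀ e : ((Ext R C 1).obj (Opposite.op S.X₃)).obj S.X₁, r • e = 0) :
    ∃ t : S.X₃ ⟶ S.X₂, t ≫ S.g = r • 𝟙 S.X₃ := by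
  have := hS.mono_f
  have := hS.epi_g
  let P := ProjectiveResolution.of S.X₃
  let α : P.complex.X 0 ⟶ S.X₂ := Projective.factorThru (X := S.X₃) (P.π.f 0) S.g
  have hα : α ≫ S.g = P.π.f 0 := Projective.factorThru_comp (X := S.X₃) _ _
  let g : P.complex.X 1 ⟶ S.X₁ := hS.exact.lift (P.complex.d 1 0 ≫ α) (by
    rw [Category.assoc, hα]; exact P.complex_d_comp_π_f_zero)
  have hg : P.complex.d 2 1 ≫ g = 0 := by
    rw [← cancel_mono S.f, Category.assoc, hS.exact.lift_f, ← Category.assoc,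
      P.complex.d_comp_d, zero_comp, zero_comp]
  obtain ⟨h, hh⟩ := P.exists_d_comp_eq_smul_of_smul_ext_eq_zero hr g hg
  let β : P.complex.X 0 ⟶ S.X₂ := r • α - h ≫ S.f
  have hβ : P.complex.d 1 0 ≫ β = 0 := by
    rw [Preadditive.comp_sub, Linear.comp_smul, ← Category.assoc, hh, Linear.smul_comp,
      hS.exact.lift_f, sub_self]
  refine ⟨P.exact₀.desc β hβ, (cancel_epi (P.π.f 0)).1 ?_⟩
  refine (Category.assoc _ _ _).symm.trans ?_
  rw [P.exact₀.g_desc, Preadditive.sub_comp, Category.assoc, S.zero, comp_zero, sub_zero,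
    Linear.smul_comp, hα]
  exact ((Linear.comp_smul _ _ _ _ r _).trans (congrArg (r • ·) (Category.comp_id _))).symm

end CategoryTheory.ShortComplex.ShortExact

namespace LinearMap

variable {R M P : Type*} [CommRing R] [AddCommGroup M] [Module R M] [AddCommGroup P]
  [Module R P] (π : P →ₗ[R] M) {x : R} (t : M →ₗ[R] P) (ht : π ∘ₗ t = x • LinearMap.id)

def prodKerToKerMkQComp : M × ker π →ₗ[R] ker ((range (lsmul R M x)).mkQ ∘ₗ π) :=
  (t.coprod (ker π).subtype).codRestrict _ fun ⟨m, k⟩ => by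
    have hm : π (t m) = x • m := congr($ht m)
    rw [mem_ker, comp_apply, coprod_apply, Submodule.subtype_apply, map_add, hm,
      mem_ker.1 k.2, add_zero, Submodule.mkQ_apply, Submodule.Quotient.mk_eq_zero]
    exact ⟨m, rfl⟩

theorem injective_prodKerToKerMkQComp (hx : Injective (lsmul R M x)) :
    Injective (prodKerToKerMkQComp π t ht) := by
  rintro ⟨m, k⟩ ⟨m', k'⟩ h
  have h' : t m + k = t m' + k' := congrArg Subtype.val h
  have hm : x • m = x • m' := by
    simpa [← comp_apply π t, ht, mem_ker.1 k.2, mem_ker.1 k'.2] using congrArg π h'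
  obtain rfl : m = m' := hx hm
  exact Prod.ext rfl (Subtype.ext (add_left_cancel h'))

theorem surjective_prodKerToKerMkQComp : Surjective (prodKerToKerMkQComp π t ht) := by
  rintro ⟨p, hp⟩
  obtain ⟨m, hm⟩ : π p ∈ range (lsmul R M x) := by
    simpa [Submodule.Quotient.mk_eq_zero] using hp
  have hk : p - t m ∈ ker π := by
    rw [mem_ker, map_sub, ← comp_apply π t, ht, ← hm]
    simp
  exact ⟨⟨m, ⟨p - t m, hk⟩⟩, Subtype.ext (by simp [prodKerToKerMkQComp])⟩

end LinearMap

theorem LinearMap.exists_comp_eq_smul_id_of_smul_ext_ker_eq_zero {R : Type u} [CommRing R]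
    {M P : Type u} [AddCommGroup M] [Module R M] [AddCommGroup P] [Module R P]
    [Module.Projective R P] (π : P →ₗ[R] M) (hπ : Surjective π) {x : R}
    (hx : ∀ e : ((Ext R (ModuleCat.{u} R) 1).obj
        (op (ModuleCat.of R M))).obj (ModuleCat.of R (LinearMap.ker π)), x • e = 0) :
    ∃ t : M →ₗ[R] P, π ∘ₗ t = x • LinearMap.id := by
  let S := ShortComplex.mk (ModuleCat.ofHom (LinearMap.ker π).subtype) (ModuleCat.ofHom π)
    (by ext k; exact k.2)
  have hS : S.ShortExact :=
    { exact := (ShortComplex.ShortExact.moduleCat_exact_iff_function_exact S).2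
        π.exact_subtype_ker_map
      mono_f := (ModuleCat.mono_iff_injective _).2 Subtype.val_injective
      epi_g := (ModuleCat.epi_iff_surjective _).2 hπ }
  obtain ⟨t, ht⟩ := hS.exists_comp_g_eq_smul_id_of_smul_ext_eq_zero hx
  exact ⟨t.hom, congrArg ModuleCat.Hom.hom ht⟩

theorem stmt5_general {R : Type u} [CommRing R] (M P₀ : Type u)
    [AddCommGroup M] [Module R M]
    [AddCommGroup P₀] [Module R P₀] [Module.Projective R P₀] [Module.Finite R P₀]
    (π : P₀ →ₗ[R] M) (hπ : Surjective π) (x : R)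
    (hreg : Injective (LinearMap.lsmul R M x))
    (hx : ∀ e : ((Ext R (ModuleCat.{u} R) 1).obj
        (op (ModuleCat.of R M))).obj (ModuleCat.of R (LinearMap.ker π)),
      x • e = 0) :
    ∃ (Q Q₁ Q₂ : ModuleCat.{u} R), Module.Projective R Q ∧ Module.Finite R Q ∧
      Module.Projective R Q₁ ∧ Module.Finite R Q₁ ∧
      Module.Projective R Q₂ ∧ Module.Finite R Q₂ ∧
      ∃ ρ : Q →ₗ[R] (M ⧸ LinearMap.range (LinearMap.lsmul R M x)), Surjective ρ ∧
        Nonempty ((↥(LinearMap.ker ρ) × Q₁) ≃ₗ[R] ((M × ↥(LinearMap.ker π)) × Q₂)) := by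
  obtain ⟨t, ht⟩ := π.exists_comp_eq_smul_id_of_smul_ext_ker_eq_zero hπ hx
  let e := LinearEquiv.ofBijective (π.prodKerToKerMkQComp t ht)
    ⟨π.injective_prodKerToKerMkQComp t ht hreg, π.surjective_prodKerToKerMkQComp t ht⟩
  refine ⟨ModuleCat.of R P₀, ModuleCat.of R PUnit.{u + 1}, ModuleCat.of R PUnit.{u + 1},
    ‹_›, ‹_›, inferInstance, inferInstance, inferInstance, inferInstance, _,
    (Submodule.mkQ_surjective _).comp hπ, ⟨e.symm.prodCongr (LinearEquiv.refl R PUnit.{u + 1})⟩⟩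

/-- If `x` is a nonzerodivisor on `M` and `x · Ext¹_R(M, Ω M) = 0`, then the first syzygy
of `M/xM` is isomorphic to `M ⊕ Ω M` up to projective direct summands. -/
theorem stmt5 {R : Type u} [CommRing R] (M P₀ : Type u)
    [AddCommGroup M] [Module R M] [Module.Finite R M]
    [AddCommGroup P₀] [Module R P₀] [Module.Projective R P₀] [Module.Finite R P₀]
    (π : P₀ →ₗ[R] M) (hπ : Surjective π) (x : R)
    (hreg : Injective (LinearMap.lsmul R M x))
    (hx : ∀ e : ((Ext R (ModuleCat.{u} R) 1).obj
        (op (ModuleCat.of R M))).obj (ModuleCat.of R (LinearMap.ker π)),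
      x • e = 0) :
    ∃ (Q Q₁ Q₂ : ModuleCat.{u} R), Module.Projective R Q ∧ Module.Finite R Q ∧
      Module.Projective R Q₁ ∧ Module.Finite R Q₁ ∧
      Module.Projective R Q₂ ∧ Module.Finite R Q₂ ∧
      ∃ ρ : Q →ₗ[R] (M ⧸ LinearMap.range (LinearMap.lsmul R M x)), Surjective ρ ∧
        Nonempty ((↥(LinearMap.ker ρ) × Q₁) ≃ₗ[R] ((M × ↥(LinearMap.ker π)) × Q₂)) :=
  stmt5_general M P₀ π hπ x hreg hx
end

section
/- Let R be a commutative noetherian ring and Φ a specialization-closed subset of Spec R. Then the union of the nonfree loci of the modules in mod^Φ(R) equals Φ ∩ S(R), where S(R) is the set of primes p such that R_p is not a field. -/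
universe u

/-!
A prime `p ∈ Φ` with `R_p` not a field is witnessed by `R ⧸ p`: its support `V(p)` lies in `Φ`
by specialization-closedness, while `(R ⧸ p)_p` is a nonzero module killed by the maximal ideal
of `R_p`, so it can only be free when that maximal ideal is zero.
-/

open PrimeSpectrum IsLocalRing

lemma Module.support_quotient_ideal {R : Type*} [CommRing R] (I : Ideal R) :
    Module.support R (R ⧸ I) = zeroLocus I := by
  rw [Module.support_eq_zeroLocus, Ideal.annihilator_quotient]

lemma LocalizedModule.annihilator_le_comap {R M : Type*} [CommRing R] [AddCommGroup M]
    [Module R M] (S : Submonoid R) :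
    Module.annihilator R M ≤ (Module.annihilator (Localization S)
      (LocalizedModule S M)).comap (algebraMap R (Localization S)) := by
  rw [Module.comap_annihilator]
  intro r hr
  refine Module.mem_annihilator.mpr fun x => ?_
  induction x using LocalizedModule.induction_on with
  | h m s => rw [LocalizedModule.smul'_mk, Module.mem_annihilator.mp hr, LocalizedModule.zero_mk]

lemma IsLocalRing.isField_of_maximalIdeal_le_annihilator {A N : Type*} [CommRing A]
    [IsLocalRing A] [AddCommGroup N] [Module A N] [Module.Free A N] [Nontrivial N]
    (h : maximalIdeal A ≤ Module.annihilator A N) : IsField A :=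
  isField_iff_maximalIdeal_eq.mpr <|
    le_bot_iff.mp (h.trans (Module.annihilator_eq_bot.mpr inferInstance).le)

lemma Localization.AtPrime.isField_of_free_localizedModule {R M : Type*} [CommRing R]
    [AddCommGroup M] [Module R M] {p : Ideal R} [p.IsPrime] (hM : p ≤ Module.annihilator R M)
    [Nontrivial (LocalizedModule p.primeCompl M)]
    [Module.Free (Localization.AtPrime p) (LocalizedModule p.primeCompl M)] :
    IsField (Localization.AtPrime p) := by
  refine isField_of_maximalIdeal_le_annihilator (N := LocalizedModule p.primeCompl M) ?_
  rw [← Localization.AtPrime.map_eq_maximalIdeal, Ideal.map_le_iff_le_comap]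
  exact hM.trans (LocalizedModule.annihilator_le_comap _)

theorem stmt11_general {R : Type u} [CommRing R]
    (Φ : Set (PrimeSpectrum R))
    (hΦ : ∀ p q : PrimeSpectrum R, p ∈ Φ → p.asIdeal ≤ q.asIdeal → q ∈ Φ) :
    { p : PrimeSpectrum R | ∃ M : ModuleCat.{u} R, Module.Finite R M ∧
        (∀ q : PrimeSpectrum R, q ∉ Φ →
          Module.Free (Localization.AtPrime q.asIdeal)
            (LocalizedModule q.asIdeal.primeCompl M)) ∧
        ¬ Module.Free (Localization.AtPrime p.asIdeal)
            (LocalizedModule p.asIdeal.primeCompl M) }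
      = Φ ∩ { p : PrimeSpectrum R | ¬ IsField (Localization.AtPrime p.asIdeal) } := by
  ext p
  constructor
  · rintro ⟨M, -, hfree, hnfree⟩
    refine ⟨not_not.mp fun hp => hnfree (hfree p hp), fun hfield => ?_⟩
    let := hfield.toField
    exact hnfree (Module.Free.of_divisionRing _ _)
  · rintro ⟨hp, hfield⟩
    have hsupp := Module.support_quotient_ideal p.asIdeal
    refine ⟨ModuleCat.of R (R ⧸ p.asIdeal), inferInstanceAs (Module.Finite R (R ⧸ p.asIdeal)),
      fun q hq => ?_, fun hfree => ?_⟩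
    · have : q ∉ Module.support R (R ⧸ p.asIdeal) := by
        rw [hsupp]
        exact fun hpq => hq (hΦ p q hp hpq)
      have := Module.notMem_support_iff.mp this
      exact Module.Free.of_subsingleton _ _
    · have : Nontrivial (LocalizedModule p.asIdeal.primeCompl (R ⧸ p.asIdeal)) := by
        rw [← Module.mem_support_iff, hsupp]
        exact (mem_zeroLocus _ _).mpr subset_rfl
      exact hfield (Localization.AtPrime.isField_of_free_localizedModule
        Ideal.annihilator_quotient.ge)

/-- For a specialization-closed `Φ ⊆ Spec R`, the union of the nonfree loci of the modules
in `mod^Φ(R)` equals `Φ ∩ S(R)`, where `S(R)` is the set of primes `p` with `R_p` not a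
field. -/
theorem stmt11 {R : Type u} [CommRing R] [IsNoetherianRing R]
    (Φ : Set (PrimeSpectrum R))
    (hΦ : ∀ p q : PrimeSpectrum R, p ∈ Φ → p.asIdeal ≤ q.asIdeal → q ∈ Φ) :
    { p : PrimeSpectrum R | ∃ M : ModuleCat.{u} R, Module.Finite R M ∧
        (∀ q : PrimeSpectrum R, q ∉ Φ →
          Module.Free (Localization.AtPrime q.asIdeal)
            (LocalizedModule q.asIdeal.primeCompl M)) ∧
        ¬ Module.Free (Localization.AtPrime p.asIdeal)
            (LocalizedModule p.asIdeal.primeCompl M) }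
      = Φ ∩ { p : PrimeSpectrum R | ¬ IsField (Localization.AtPrime p.asIdeal) } :=
  stmt11_general Φ hΦ
end
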